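/- arXiv:1411.0073 — 4 statements merged into one kernel-verified Lean document; each statement's English description precedes it below -/
import Mathlib

section
/- Consider two mixture-of-two-deterministic-rankings models on 4 items {a,b,c,d}: Model 1 is a uniform mixture of the orderings a>b>c>d and b>a>d>c; Model 2 is a uniform mixture of b>a>c>d and a>b>d>c. Then for every subset of 3 items, the induced distribution on the relative order of those 3 items is identical under the two models; hence the two models cannot be distinguished from 3-wise comparison data. -/
open Finset
open scoped Classical

-- `σ i` is the rank of item `i` (rank `0` is best).  Items: `0 = a`, `1 = b`, `2 = c`, `3 = d`.
/-- The ordering a > b > c > d. -/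
def perm1 : Equiv.Perm (Fin 4) := Equiv.refl _
/-- The ordering b > a > d > c. -/
def perm2 : Equiv.Perm (Fin 4) := (Equiv.swap 0 1).trans (Equiv.swap 2 3)
/-- The ordering b > a > c > d. -/
def perm3 : Equiv.Perm (Fin 4) := Equiv.swap 0 1
/-- The ordering a > b > d > c. -/
def perm4 : Equiv.Perm (Fin 4) := Equiv.swap 2 3

/-- Model 1: uniform mixture of a>b>c>d and b>a>d>c. -/
noncomputable def model1 (σ : Equiv.Perm (Fin 4)) : ℝ :=
  (if σ = perm1 then (1:ℝ)/2 else 0) + (if σ = perm2 then (1:ℝ)/2 else 0)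
/-- Model 2: uniform mixture of b>a>c>d and a>b>d>c. -/
noncomputable def model2 (σ : Equiv.Perm (Fin 4)) : ℝ :=
  (if σ = perm3 then (1:ℝ)/2 else 0) + (if σ = perm4 then (1:ℝ)/2 else 0)

/-- `σ` and `ρ` induce the same relative order on the subset `S`. -/
def agreesOn (S : Finset (Fin 4)) (ρ σ : Equiv.Perm (Fin 4)) : Prop :=
  ∀ i ∈ S, ∀ j ∈ S, (σ i < σ j ↔ ρ i < ρ j)

lemma agrees_iff {S : Finset (Fin 4)} {ρ σ τ : Equiv.Perm (Fin 4)}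
    (h : agreesOn S σ τ) : agreesOn S ρ τ ↔ agreesOn S ρ σ := by
  constructor <;> intro h2 i hi j hj
  · exact (h i hi j hj).symm.trans (h2 i hi j hj)
  · exact (h i hi j hj).trans (h2 i hi j hj)

lemma sum_model1 (p : Equiv.Perm (Fin 4) → Prop) [DecidablePred p] :
    ∑ σ ∈ Finset.univ.filter p, model1 σ
      = (if p perm1 then (1:ℝ)/2 else 0) + (if p perm2 then (1:ℝ)/2 else 0) := by
  unfold model1
  rw [Finset.sum_add_distrib, Finset.sum_ite_eq' _ perm1, Finset.sum_ite_eq' _ perm2]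
  simp [Finset.mem_filter]

lemma sum_model2 (p : Equiv.Perm (Fin 4) → Prop) [DecidablePred p] :
    ∑ σ ∈ Finset.univ.filter p, model2 σ
      = (if p perm3 then (1:ℝ)/2 else 0) + (if p perm4 then (1:ℝ)/2 else 0) := by
  unfold model2
  rw [Finset.sum_add_distrib, Finset.sum_ite_eq' _ perm3, Finset.sum_ite_eq' _ perm4]
  simp [Finset.mem_filter]

/-- For every 3-element subset of the items, the induced distribution on the
relative order of those 3 items is identical under the two mixture models:
the two models cannot be distinguished from 3-wise comparison data. -/
theorem mixtures_indistinguishable_from_triples :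
    ∀ S : Finset (Fin 4), S.card = 3 →
      ∀ ρ : Equiv.Perm (Fin 4),
        (∑ σ ∈ Finset.univ.filter (fun σ : Equiv.Perm (Fin 4) => agreesOn S ρ σ), model1 σ)
          = ∑ σ ∈ Finset.univ.filter (fun σ : Equiv.Perm (Fin 4) => agreesOn S ρ σ), model2 σ := by
  intro S hS ρ
  rw [sum_model1, sum_model2]
  have hcases : S = {0,1,2} ∨ S = {0,1,3} ∨ S = {0,2,3} ∨ S = {1,2,3} := by
    revert hS; revert S; decide
  rcases hcases with h|h|h|h <;> subst h
  · rw [agrees_iff (show agreesOn {0,1,2} perm4 perm1 by unfold agreesOn perm1 perm4; decide),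
        agrees_iff (show agreesOn {0,1,2} perm3 perm2 by unfold agreesOn perm2 perm3; decide),
        add_comm]
  · rw [agrees_iff (show agreesOn {0,1,3} perm4 perm1 by unfold agreesOn perm1 perm4; decide),
        agrees_iff (show agreesOn {0,1,3} perm3 perm2 by unfold agreesOn perm2 perm3; decide),
        add_comm]
  · rw [agrees_iff (show agreesOn {0,2,3} perm3 perm1 by unfold agreesOn perm1 perm3; decide),
        agrees_iff (show agreesOn {0,2,3} perm4 perm2 by unfold agreesOn perm2 perm4; decide)]
  · rw [agrees_iff (show agreesOn {1,2,3} perm3 perm1 by unfold agreesOn perm1 perm3; decide),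
        agrees_iff (show agreesOn {1,2,3} perm4 perm2 by unfold agreesOn perm2 perm4; decide)]
end

section
/- Let x ∈ {-1,0,1}^N be a random vector with exactly ℓ nonzero entries almost surely (so xᵀx = ℓ a.s.), and let X = x xᵀ − E[x xᵀ]. Then for every integer k ≥ 1, E[X^k] ⪯ E[(x xᵀ)^k] = ℓ^{k−1} E[x xᵀ] in the positive semidefinite order. -/
open MeasureTheory

/-- Entrywise expectation of a random matrix. -/
noncomputable def matExp {Ω : Type*} [MeasurableSpace Ω] (μ : Measure Ω) {N : ℕ}
    (f : Ω → Matrix (Fin N) (Fin N) ℝ) : Matrix (Fin N) (Fin N) ℝ :=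
  Matrix.of fun i j => ∫ ω, f ω i j ∂μ

/-- Outer product `x xᵀ`. -/
def outer {N : ℕ} (x : Fin N → ℝ) : Matrix (Fin N) (Fin N) ℝ :=
  Matrix.of fun i j => x i * x j

/-! Write `A = x xᵀ` and `X = A - E A`. Since `A² = ℓ A`, every moment is `E[A^k] = ℓ^(k-1) E A`,
and `0 ⪯ A ⪯ ℓ I` pointwise, hence also `0 ⪯ E A ⪯ ℓ I` and `-ℓ I ⪯ X ⪯ ℓ I`. For `k = 1`,
`E X = 0 ⪯ E A`. For `k ≥ 2` the functional calculus gives `X^k ⪯ ℓ^(k-2) X²` pointwise, and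
`E[X²] = ℓ E A - (E A)² ⪯ ℓ E A`. -/

open Matrix
open scoped MatrixOrder

theorem IsSelfAdjoint.pow_add_two_le_smul_sq {A : Type*} [Ring A] [StarRing A] [PartialOrder A]
    [StarOrderedRing A] [TopologicalSpace A] [Algebra ℝ A]
    [ContinuousFunctionalCalculus ℝ A IsSelfAdjoint] [NonnegSpectrumClass ℝ A]
    {a : A} (ha : IsSelfAdjoint a) {c : ℝ} (hlo : -algebraMap ℝ A c ≤ a)
    (hhi : a ≤ algebraMap ℝ A c) (m : ℕ) : a ^ (m + 2) ≤ c ^ m • a ^ 2 := by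
  rw [← map_neg, algebraMap_le_iff_le_spectrum] at hlo
  rw [le_algebraMap_iff_spectrum_le] at hhi
  have key : cfc (fun t : ℝ => t ^ (m + 2)) a ≤ cfc (fun t : ℝ => c ^ m * t ^ 2) a := by
    refine (cfc_le_iff _ _ a).mpr fun t ht => ?_
    have ht' : |t| ≤ c := abs_le.mpr ⟨hlo t ht, hhi t ht⟩
    calc t ^ (m + 2) ≤ |t| ^ m * t ^ 2 := by
          rw [← sq_abs t, ← pow_add, ← abs_pow]; exact le_abs_self _
      _ ≤ c ^ m * t ^ 2 := by gcongr
  rwa [cfc_pow_id a, cfc_const_mul (c ^ m) (· ^ 2) a, cfc_pow_id a] at key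

variable {N : ℕ}

lemma outer_eq_vecMulVec (y : Fin N → ℝ) : outer y = vecMulVec y y := rfl

lemma outer_nonneg (y : Fin N → ℝ) : 0 ≤ outer y :=
  (posSemidef_vecMulVec_self_star y).nonneg

lemma outer_mul_self (y : Fin N → ℝ) : outer y * outer y = (∑ i, y i ^ 2) • outer y := by
  simp [outer_eq_vecMulVec, vecMulVec_mul_vecMulVec, dotProduct, sq]

lemma outer_pow_succ (y : Fin N → ℝ) (m : ℕ) :
    outer y ^ (m + 1) = (∑ i, y i ^ 2) ^ m • outer y := by
  induction m with
  | zero => simp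
  | succ m ih => rw [pow_succ, ih, smul_mul_assoc, outer_mul_self, smul_smul, pow_succ]

lemma outer_le_algebraMap (y : Fin N → ℝ) : outer y ≤ algebraMap ℝ _ (∑ i, y i ^ 2) := by
  rw [le_iff, Algebra.algebraMap_eq_smul_one]
  refine .of_dotProduct_mulVec_nonneg ((isHermitian_one.smul (.all _)).sub ?_) fun v => ?_
  · exact (posSemidef_vecMulVec_self_star y).isHermitian
  · have hcs := Finset.sum_mul_sq_le_sq_mul_sq Finset.univ y v
    simp only [star_trivial, sub_mulVec, smul_mulVec, one_mulVec, dotProduct_sub, dotProduct_smul,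
      outer_eq_vecMulVec, vecMulVec_mulVec, smul_eq_mul, op_smul_eq_mul, dotProduct_comm v y]
    simp only [dotProduct, ← sq] at hcs ⊢
    linarith

lemma norm_le_sqrt_sum_sq {ι : Type*} [Fintype ι] (y : ι → ℝ) : ‖y‖ ≤ √(∑ i, y i ^ 2) :=
  (pi_norm_le_iff_of_nonneg (Real.sqrt_nonneg _)).mpr fun i => by
    simpa [Real.norm_eq_abs] using Real.abs_le_sqrt
      (Finset.single_le_sum (fun j _ => sq_nonneg (y j)) (Finset.mem_univ i))

@[fun_prop]
lemma continuous_outer : Continuous (outer : (Fin N → ℝ) → Matrix (Fin N) (Fin N) ℝ) :=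
  continuous_id.matrix_vecMulVec continuous_id

section Expectation

variable {Ω : Type*} [MeasurableSpace Ω] {μ : Measure Ω}

/-- `Matrix` carries no global norm, so integrability of a random matrix is stated entrywise. -/
def EntrywiseIntegrable (μ : Measure Ω) (f : Ω → Matrix (Fin N) (Fin N) ℝ) : Prop :=
  ∀ i j, Integrable (fun ω => f ω i j) μ

lemma entrywiseIntegrable_const [IsFiniteMeasure μ] (B : Matrix (Fin N) (Fin N) ℝ) :
    EntrywiseIntegrable μ (fun _ => B) :=
  fun _ _ => integrable_const _

lemma entrywiseIntegrable_comp {E : Type*} [TopologicalSpace E] [MeasurableSpace E]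
    [OpensMeasurableSpace E] [IsFiniteMeasure μ] {x : Ω → E} (hx : Measurable x) {K : Set E}
    (hK : IsCompact K) (hxK : ∀ ω, x ω ∈ K) {g : E → Matrix (Fin N) (Fin N) ℝ}
    (hg : Continuous g) : EntrywiseIntegrable μ (fun ω => g (x ω)) := fun i j => by
  have hgij : Continuous fun y => g y i j := hg.matrix_elem i j
  obtain ⟨C, hC⟩ := hK.exists_bound_of_continuousOn hgij.continuousOn
  exact .of_bound (hgij.measurable.comp hx).aestronglyMeasurable C
    (.of_forall fun ω => hC _ (hxK ω))

lemma EntrywiseIntegrable.sub {f g : Ω → Matrix (Fin N) (Fin N) ℝ}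
    (hf : EntrywiseIntegrable μ f) (hg : EntrywiseIntegrable μ g) :
    EntrywiseIntegrable μ (fun ω => f ω - g ω) :=
  fun i j => (hf i j).sub (hg i j)

lemma EntrywiseIntegrable.const_smul {f : Ω → Matrix (Fin N) (Fin N) ℝ}
    (hf : EntrywiseIntegrable μ f) (c : ℝ) : EntrywiseIntegrable μ (fun ω => c • f ω) :=
  fun i j => (hf i j).const_mul c

lemma EntrywiseIntegrable.mul_const {f : Ω → Matrix (Fin N) (Fin N) ℝ}
    (hf : EntrywiseIntegrable μ f) (B : Matrix (Fin N) (Fin N) ℝ) :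
    EntrywiseIntegrable μ (fun ω => f ω * B) :=
  fun i j => by simpa only [mul_apply] using
    integrable_finsetSum _ fun l _ => (hf i l).mul_const (B l j)

lemma EntrywiseIntegrable.const_mul {f : Ω → Matrix (Fin N) (Fin N) ℝ}
    (hf : EntrywiseIntegrable μ f) (B : Matrix (Fin N) (Fin N) ℝ) :
    EntrywiseIntegrable μ (fun ω => B * f ω) :=
  fun i j => by simpa only [mul_apply] using
    integrable_finsetSum _ fun l _ => (hf l j).const_mul (B i l)

lemma matExp_smul (c : ℝ) (f : Ω → Matrix (Fin N) (Fin N) ℝ) :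
    matExp μ (fun ω => c • f ω) = c • matExp μ f := by
  ext i j
  exact integral_const_mul c _

lemma matExp_const [IsProbabilityMeasure μ] (B : Matrix (Fin N) (Fin N) ℝ) :
    matExp μ (fun _ => B) = B := by
  ext i j
  simp [matExp]

lemma matExp_sub {f g : Ω → Matrix (Fin N) (Fin N) ℝ} (hf : EntrywiseIntegrable μ f)
    (hg : EntrywiseIntegrable μ g) : matExp μ (fun ω => f ω - g ω) = matExp μ f - matExp μ g := by
  ext i j
  exact integral_sub (hf i j) (hg i j)

lemma matExp_mul_const {f : Ω → Matrix (Fin N) (Fin N) ℝ} (hf : EntrywiseIntegrable μ f)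
    (B : Matrix (Fin N) (Fin N) ℝ) : matExp μ (fun ω => f ω * B) = matExp μ f * B := by
  ext i j
  simp only [matExp, of_apply, mul_apply]
  rw [integral_finsetSum _ fun l _ => (hf i l).mul_const (B l j)]
  exact Finset.sum_congr rfl fun l _ => integral_mul_const _ _

lemma matExp_const_mul {f : Ω → Matrix (Fin N) (Fin N) ℝ} (hf : EntrywiseIntegrable μ f)
    (B : Matrix (Fin N) (Fin N) ℝ) : matExp μ (fun ω => B * f ω) = B * matExp μ f := by
  ext i j
  simp only [matExp, of_apply, mul_apply]
  rw [integral_finsetSum _ fun l _ => (hf l j).const_mul (B i l)]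
  exact Finset.sum_congr rfl fun l _ => integral_const_mul _ _

lemma dotProduct_matExp_mulVec {f : Ω → Matrix (Fin N) (Fin N) ℝ} (hf : EntrywiseIntegrable μ f)
    (v : Fin N → ℝ) : v ⬝ᵥ matExp μ f *ᵥ v = ∫ ω, v ⬝ᵥ f ω *ᵥ v ∂μ := by
  have hint : ∀ i j, Integrable (fun ω => v i * (f ω i j * v j)) μ :=
    fun i j => ((hf i j).mul_const (v j)).const_mul (v i)
  simp only [dotProduct, mulVec, matExp, of_apply, Finset.mul_sum]
  rw [integral_finsetSum _ fun i _ => integrable_finsetSum _ fun j _ => hint i j]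
  refine Finset.sum_congr rfl fun i _ => ?_
  rw [integral_finsetSum _ fun j _ => hint i j]
  exact Finset.sum_congr rfl fun j _ => by rw [integral_const_mul, integral_mul_const]

lemma matExp_nonneg {f : Ω → Matrix (Fin N) (Fin N) ℝ} (hf : EntrywiseIntegrable μ f)
    (hpos : ∀ ω, 0 ≤ f ω) : 0 ≤ matExp μ f := by
  have hherm : (matExp μ f).IsHermitian := by
    ext i j
    simp only [conjTranspose_apply, star_trivial, matExp, of_apply]
    exact integral_congr_ae (.of_forall fun ω => (hpos ω).posSemidef.isHermitian.apply i j)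
  refine (PosSemidef.of_dotProduct_mulVec_nonneg hherm fun v => ?_).nonneg
  rw [star_trivial, dotProduct_matExp_mulVec hf]
  exact integral_nonneg fun ω => by
    simpa using (hpos ω).posSemidef.dotProduct_mulVec_nonneg v

lemma matExp_mono {f g : Ω → Matrix (Fin N) (Fin N) ℝ} (hf : EntrywiseIntegrable μ f)
    (hg : EntrywiseIntegrable μ g) (hfg : ∀ ω, f ω ≤ g ω) : matExp μ f ≤ matExp μ g := by
  rw [← sub_nonneg, ← matExp_sub hg hf]
  exact matExp_nonneg (hg.sub hf) fun ω => sub_nonneg.mpr (hfg ω)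

lemma matExp_sub_matExp [IsProbabilityMeasure μ] {f : Ω → Matrix (Fin N) (Fin N) ℝ}
    (hf : EntrywiseIntegrable μ f) : matExp μ (fun ω => f ω - matExp μ f) = 0 := by
  rw [matExp_sub hf (entrywiseIntegrable_const _), matExp_const, sub_self]

lemma matExp_sub_matExp_sq [IsProbabilityMeasure μ] {f : Ω → Matrix (Fin N) (Fin N) ℝ}
    (hf : EntrywiseIntegrable μ f) (hf2 : EntrywiseIntegrable μ (fun ω => f ω ^ 2)) :
    matExp μ (fun ω => (f ω - matExp μ f) ^ 2) = matExp μ (fun ω => f ω ^ 2) - matExp μ f ^ 2 := by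
  set B := matExp μ f
  have hexpand : ∀ ω, (f ω - B) ^ 2 = (f ω ^ 2 - f ω * B) - (B * f ω - B ^ 2) := fun ω => by
    simp only [sq, sub_mul, mul_sub]; abel
  simp_rw [hexpand]
  rw [matExp_sub (hf2.sub (hf.mul_const B)) ((hf.const_mul B).sub (entrywiseIntegrable_const _)),
    matExp_sub hf2 (hf.mul_const B), matExp_sub (hf.const_mul B) (entrywiseIntegrable_const _),
    matExp_mul_const hf, matExp_const_mul hf, matExp_const, sq B]
  abel

lemma matExp_sub_matExp_pow_succ_le [IsProbabilityMeasure μ] {f : Ω → Matrix (Fin N) (Fin N) ℝ}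
    {c : ℝ} (hc : 0 ≤ c) (hf : EntrywiseIntegrable μ f)
    (hcentered : ∀ n, EntrywiseIntegrable μ (fun ω => (f ω - matExp μ f) ^ n))
    (hnonneg : ∀ ω, 0 ≤ f ω) (hle : ∀ ω, f ω ≤ algebraMap ℝ _ c) (hsq : ∀ ω, f ω ^ 2 = c • f ω)
    (m : ℕ) : matExp μ (fun ω => (f ω - matExp μ f) ^ (m + 1)) ≤ c ^ m • matExp μ f := by
  set B := matExp μ f
  have hB_nonneg : 0 ≤ B := matExp_nonneg hf hnonneg
  have hB_le : B ≤ algebraMap ℝ _ c :=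
    matExp_const (μ := μ) (algebraMap ℝ _ c) ▸ matExp_mono hf (entrywiseIntegrable_const _) hle
  rcases m with _ | m
  · simpa [B, matExp_sub_matExp hf] using hB_nonneg
  have hvariance : matExp μ (fun ω => (f ω - B) ^ 2) = c • B - B ^ 2 := by
    have hf2 : EntrywiseIntegrable μ (fun ω => f ω ^ 2) := by simpa [hsq] using hf.const_smul c
    rw [matExp_sub_matExp_sq hf hf2]
    simp only [hsq, matExp_smul, B]
  have hpointwise (ω : Ω) : (f ω - B) ^ (m + 2) ≤ c ^ m • (f ω - B) ^ 2 := by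
    refine (IsSelfAdjoint.of_nonneg (hnonneg ω) |>.sub (.of_nonneg hB_nonneg))
      |>.pow_add_two_le_smul_sq ?_ ?_ m
    · exact (neg_le_neg hB_le).trans (by simpa using sub_le_sub_right (hnonneg ω) B)
    · exact (sub_le_self _ hB_nonneg).trans (hle ω)
  calc matExp μ (fun ω => (f ω - B) ^ (m + 2))
      ≤ matExp μ (fun ω => c ^ m • (f ω - B) ^ 2) :=
        matExp_mono (hcentered _) ((hcentered 2).const_smul _) hpointwise
    _ = c ^ m • (c • B - B ^ 2) := by rw [matExp_smul, hvariance]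
    _ ≤ c ^ m • c • B := by
        gcongr
        exact sub_le_self _ (IsSelfAdjoint.of_nonneg hB_nonneg).sq_nonneg
    _ = c ^ (m + 1) • B := by rw [smul_smul, pow_succ]

lemma matExp_outer_pow_succ {x : Ω → Fin N → ℝ} {c : ℝ} (hx : ∀ ω, ∑ i, x ω i ^ 2 = c) (m : ℕ) :
    matExp μ (fun ω => outer (x ω) ^ (m + 1)) = c ^ m • matExp μ (fun ω => outer (x ω)) := by
  simp_rw [outer_pow_succ, hx, matExp_smul]

end Expectation

theorem centered_outer_moment_bound_general {Ω : Type*} [MeasurableSpace Ω] (μ : Measure Ω)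
    [IsProbabilityMeasure μ] {N ℓ : ℕ}
    (x : Ω → Fin N → ℝ)
    (hmeas : ∀ i, Measurable fun ω => x ω i)
    (hℓ : ∀ ω, ∑ i, x ω i ^ 2 = (ℓ : ℝ))
    (Xbar : Matrix (Fin N) (Fin N) ℝ) (hXbar : Xbar = matExp μ (fun ω => outer (x ω)))
    (k : ℕ) (hk : 1 ≤ k) :
    (matExp μ (fun ω => (outer (x ω)) ^ k) - matExp μ (fun ω => (outer (x ω) - Xbar) ^ k)).PosSemidef
      ∧ matExp μ (fun ω => (outer (x ω)) ^ k) = (ℓ : ℝ) ^ (k - 1) • Xbar := by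
  subst hXbar
  obtain ⟨m, rfl⟩ := Nat.exists_eq_add_of_le' hk
  have hint (g : (Fin N → ℝ) → Matrix (Fin N) (Fin N) ℝ) (hg : Continuous g) :
      EntrywiseIntegrable μ (fun ω => g (x ω)) :=
    entrywiseIntegrable_comp (measurable_pi_lambda _ hmeas) (isCompact_closedBall 0 √ℓ)
      (fun ω => by simpa [← hℓ ω] using norm_le_sqrt_sum_sq (x ω)) hg
  refine ⟨?_, matExp_outer_pow_succ hℓ m⟩
  rw [← le_iff, matExp_outer_pow_succ hℓ m]
  exact matExp_sub_matExp_pow_succ_le ℓ.cast_nonneg (hint outer continuous_outer)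
    (fun n => hint (fun y => (outer y - _) ^ n) (by fun_prop)) (fun ω => outer_nonneg (x ω))
    (fun ω => hℓ ω ▸ outer_le_algebraMap (x ω)) (fun ω => by rw [sq, outer_mul_self, hℓ]) m

/-- If `x ∈ {-1,0,1}^N` has exactly `ℓ` nonzero entries almost surely
(so `xᵀx = ℓ` a.s.), and `X = x xᵀ − E[x xᵀ]`, then for every `k ≥ 1`,
`E[X^k] ⪯ E[(x xᵀ)^k] = ℓ^{k−1} E[x xᵀ]` in the Loewner order. -/
theorem centered_outer_moment_bound {Ω : Type*} [MeasurableSpace Ω] (μ : Measure Ω)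
    [IsProbabilityMeasure μ] {N ℓ : ℕ}
    (x : Ω → Fin N → ℝ)
    (hmeas : ∀ i, Measurable fun ω => x ω i)
    (hval : ∀ ω i, x ω i = -1 ∨ x ω i = 0 ∨ x ω i = 1)
    (hℓ : ∀ ω, ∑ i, x ω i ^ 2 = (ℓ : ℝ))
    (Xbar : Matrix (Fin N) (Fin N) ℝ) (hXbar : Xbar = matExp μ (fun ω => outer (x ω)))
    (k : ℕ) (hk : 1 ≤ k) :
    (matExp μ (fun ω => (outer (x ω)) ^ k) - matExp μ (fun ω => (outer (x ω) - Xbar) ^ k)).PosSemidef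
      ∧ matExp μ (fun ω => (outer (x ω)) ^ k) = (ℓ : ℝ) ^ (k - 1) • Xbar :=
  centered_outer_moment_bound_general μ x hmeas hℓ Xbar hXbar k hk
end

section
/- Let p be an aperiodic, irreducible, reversible Markov chain on [n] with stationary distribution π, and p̃ another chain with Δ = p̃ − p. Let π̃^{(t)} be the distribution at time t under p̃ starting from π̃^{(0)}. Then ‖π̃^{(t)} − π‖/‖π‖ ≤ ρ^t (‖π̃^{(0)} − π‖/‖π‖) √(π_max/π_min) + (1/(1−ρ)) ‖Δ‖₂ √(π_max/π_min), where ρ = λ_max(p) + ‖Δ‖₂ √(π_max/π_min) and λ_max(p) is the second largest eigenvalue modulus of p. -/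
/-!
Let `e_t = π̃^{(t)} - π`. Since `π p = π` and `e_t` sums to zero,
`e_{t+1} = e_t p + e_t Δ + π Δ`. In the coordinates `x_t = e_t D^{-1/2}` (`D = diag π`) the
first term becomes `x_t Q` with `Q = D^{1/2} p D^{-1/2} - √π √πᵀ`, whose operator norm is
`λ_max(p)`. Passing between `e` and `x` costs the factors `√π_max` and `1/√π_min`, so
`‖x_{t+1}‖ ≤ ρ ‖x_t‖ + ‖Δ‖₂ ‖π‖ / √π_min`, and unrolling this linear recursion gives the bound.
-/

open Matrix Finset
open scoped Matrix.Norms.L2Operator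

noncomputable def opNorm {m n : ℕ} (A : Matrix (Fin m) (Fin n) ℝ) : ℝ :=
  ‖LinearMap.toContinuousLinearMap (Matrix.toEuclideanLin A)‖

noncomputable def euclNorm {n : ℕ} (v : Fin n → ℝ) : ℝ := Real.sqrt (∑ i, v i ^ 2)

/-- Second largest eigenvalue modulus of a reversible chain `p` with stationary
distribution `π` (summing to 1). -/
noncomputable def lamMax {n : ℕ} (π : Fin n → ℝ) (p : Matrix (Fin n) (Fin n) ℝ) : ℝ :=
  opNorm (Matrix.of fun i j =>
    Real.sqrt (π i) * p i j / Real.sqrt (π j) - Real.sqrt (π i) * Real.sqrt (π j))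

section Norms

variable {m n : ℕ}

lemma opNorm_eq_norm (A : Matrix (Fin m) (Fin n) ℝ) : opNorm A = ‖A‖ := rfl

lemma opNorm_nonneg (A : Matrix (Fin m) (Fin n) ℝ) : 0 ≤ opNorm A := norm_nonneg _

lemma euclNorm_eq_norm_toLp (v : Fin n → ℝ) : euclNorm v = ‖WithLp.toLp 2 v‖ := by
  simp [euclNorm, EuclideanSpace.norm_eq]

lemma euclNorm_nonneg (v : Fin n → ℝ) : 0 ≤ euclNorm v := Real.sqrt_nonneg _

lemma euclNorm_add_le (u v : Fin n → ℝ) : euclNorm (u + v) ≤ euclNorm u + euclNorm v := by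
  simp only [euclNorm_eq_norm_toLp, WithLp.toLp_add]
  exact norm_add_le _ _

lemma euclNorm_vecMul_le (v : Fin m → ℝ) (A : Matrix (Fin m) (Fin n) ℝ) :
    euclNorm (v ᵥ* A) ≤ opNorm A * euclNorm v := by
  rw [← mulVec_transpose, opNorm_eq_norm, ← l2_opNorm_conjTranspose,
    conjTranspose_eq_transpose_of_trivial, euclNorm_eq_norm_toLp, euclNorm_eq_norm_toLp]
  exact Aᵀ.l2_opNorm_mulVec (WithLp.toLp 2 v)

lemma euclNorm_le_mul_of_sq_le {u v : Fin n → ℝ} {c : ℝ} (hc : 0 ≤ c)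
    (h : ∀ i, u i ^ 2 ≤ c ^ 2 * v i ^ 2) : euclNorm u ≤ c * euclNorm v := by
  rw [euclNorm, euclNorm, ← Real.sqrt_sq hc, ← Real.sqrt_mul (sq_nonneg c), mul_sum]
  exact Real.sqrt_le_sqrt (sum_le_sum fun i _ => h i)

end Norms

section Chain

variable {ι R : Type*} [Fintype ι] [CommRing R]

lemma mulVec_one_of_sum_row {P : Matrix ι ι R} (hP : ∀ i, ∑ j, P i j = 1) : P *ᵥ 1 = 1 := by
  ext i
  simp [mulVec, dotProduct, hP]

lemma sum_vecMul_of_mulVec_one {P : Matrix ι ι R} (hP : P *ᵥ 1 = 1) (v : ι → R) :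
    ∑ j, (v ᵥ* P) j = ∑ i, v i := by
  rw [← dotProduct_one, ← dotProduct_mulVec, hP, dotProduct_one]

lemma pow_mulVec_one [DecidableEq ι] {P : Matrix ι ι R} (hP : P *ᵥ 1 = 1) (t : ℕ) :
    P ^ t *ᵥ 1 = 1 := by
  induction t with
  | zero => exact one_mulVec 1
  | succ t ih => rw [pow_succ, ← mulVec_mulVec, hP, ih]

lemma vecMul_eq_self_of_reversible {π : ι → R} {P : Matrix ι ι R} (hP : P *ᵥ 1 = 1)
    (hrev : ∀ i j, π i * P i j = π j * P j i) : π ᵥ* P = π := by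
  ext j
  calc (π ᵥ* P) j = π j * (P *ᵥ 1) j := by
        simp only [vecMul, dotProduct, mulVec, hrev, mul_sum, Pi.one_apply, mul_one]
    _ = π j := by rw [hP, Pi.one_apply, mul_one]

lemma vecMul_sub_eq_of_vecMul_eq_self {π : ι → R} {P : Matrix ι ι R} (hπ : π ᵥ* P = π)
    (μ : ι → R) (Q : Matrix ι ι R) :
    μ ᵥ* Q - π = (μ - π) ᵥ* P + ((μ - π) ᵥ* (Q - P) + π ᵥ* (Q - P)) := by
  rw [← add_vecMul, sub_add_cancel, vecMul_sub, sub_vecMul, hπ]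
  abel

end Chain

section Symmetrization

variable {ι : Type*}

/-- `D^{1/2} P D^{-1/2} - √π √πᵀ` for `D = diag π`. -/
noncomputable def centeredSymmetrization (π : ι → ℝ) (P : Matrix ι ι ℝ) : Matrix ι ι ℝ :=
  of fun i j => √(π i) * P i j / √(π j) - √(π i) * √(π j)

noncomputable def invSqrtScale (π v : ι → ℝ) : ι → ℝ := fun i => v i / √(π i)

lemma invSqrtScale_add (π u v : ι → ℝ) :
    invSqrtScale π (u + v) = invSqrtScale π u + invSqrtScale π v :=
  funext fun i => add_div (u i) (v i) _

lemma invSqrtScale_vecMul_centeredSymmetrization [Fintype ι] {π e : ι → ℝ} (hπ : ∀ i, 0 < π i)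
    (he : ∑ i, e i = 0) (P : Matrix ι ι ℝ) :
    invSqrtScale π e ᵥ* centeredSymmetrization π P = invSqrtScale π (e ᵥ* P) := by
  ext j
  calc (invSqrtScale π e ᵥ* centeredSymmetrization π P) j
      = ∑ i, (e i * P i j / √(π j) - e i * √(π j)) := by
        refine sum_congr rfl fun i _ => ?_
        have := (Real.sqrt_pos.2 (hπ i)).ne'
        simp only [invSqrtScale, centeredSymmetrization, of_apply]
        field_simp
    _ = (∑ i, e i * P i j) / √(π j) - (∑ i, e i) * √(π j) := by
        rw [sum_sub_distrib, sum_div, sum_mul]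
    _ = invSqrtScale π (e ᵥ* P) j := by
        rw [he, zero_mul, sub_zero]
        rfl

end Symmetrization

lemma le_pow_mul_add_div_one_sub_of_le_mul_add {a : ℕ → ℝ} {ρ b : ℝ} (hρ : 0 ≤ ρ) (hρ1 : ρ < 1)
    (hb : 0 ≤ b) (ha : ∀ s, a (s + 1) ≤ ρ * a s + b) (t : ℕ) :
    a t ≤ ρ ^ t * a 0 + b / (1 - ρ) := by
  have h1ρ : 0 < 1 - ρ := sub_pos.2 hρ1
  induction t with
  | zero => simpa using div_nonneg hb h1ρ.le
  | succ t ih =>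
    calc a (t + 1) ≤ ρ * a t + b := ha t
      _ ≤ ρ * (ρ ^ t * a 0 + b / (1 - ρ)) + b := by gcongr
      _ = ρ ^ (t + 1) * a 0 + b / (1 - ρ) := by field_simp; ring

section Weighted

variable {n : ℕ} {π : Fin n → ℝ}

lemma lamMax_eq_opNorm_centeredSymmetrization (p : Matrix (Fin n) (Fin n) ℝ) :
    lamMax π p = opNorm (centeredSymmetrization π p) := rfl

lemma euclNorm_invSqrtScale_le {c : ℝ} (hc : 0 < c) (hπ : ∀ i, c ≤ π i) (v : Fin n → ℝ) :
    euclNorm (invSqrtScale π v) ≤ euclNorm v / √c := by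
  rw [div_eq_inv_mul]
  refine euclNorm_le_mul_of_sq_le (by positivity) fun i => ?_
  rw [invSqrtScale, div_pow, Real.sq_sqrt (hc.trans_le (hπ i)).le, inv_pow, Real.sq_sqrt hc.le,
    inv_mul_eq_div]
  exact div_le_div_of_nonneg_left (sq_nonneg _) hc (hπ i)

lemma euclNorm_le_sqrt_mul_euclNorm_invSqrtScale {C : ℝ} (hπ : ∀ i, 0 < π i)
    (hC : ∀ i, π i ≤ C) (v : Fin n → ℝ) :
    euclNorm v ≤ √C * euclNorm (invSqrtScale π v) := by
  refine euclNorm_le_mul_of_sq_le (Real.sqrt_nonneg C) fun i => ?_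
  have hv : v i = invSqrtScale π v i * √(π i) :=
    (div_mul_cancel₀ _ (Real.sqrt_pos.2 (hπ i)).ne').symm
  rw [hv, mul_pow, Real.sq_sqrt (hπ i).le, Real.sq_sqrt ((hπ i).le.trans (hC i)), mul_comm C]
  exact mul_le_mul_of_nonneg_left (hC i) (sq_nonneg _)

lemma euclNorm_invSqrtScale_vecMul_sub_le {πmin πmax : ℝ} (hπmin_pos : 0 < πmin)
    (hπmin : ∀ i, πmin ≤ π i) (hπmax : ∀ i, π i ≤ πmax)
    {p tp : Matrix (Fin n) (Fin n) ℝ} (hstat : π ᵥ* p = π) {μ : Fin n → ℝ}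
    (hμ : ∑ i, μ i = ∑ i, π i) :
    euclNorm (invSqrtScale π (μ ᵥ* tp - π))
      ≤ (lamMax π p + opNorm (tp - p) * √(πmax / πmin)) * euclNorm (invSqrtScale π (μ - π))
        + opNorm (tp - p) * euclNorm π / √πmin := by
  have hπ i : 0 < π i := hπmin_pos.trans_le (hπmin i)
  set e := μ - π
  have he : ∑ i, e i = 0 := by simp only [e, Pi.sub_apply, sum_sub_distrib, hμ, sub_self]
  have hQ : euclNorm (invSqrtScale π e ᵥ* centeredSymmetrization π p)
      ≤ lamMax π p * euclNorm (invSqrtScale π e) := by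
    rw [lamMax_eq_opNorm_centeredSymmetrization]
    exact euclNorm_vecMul_le _ _
  have heΔ : euclNorm (invSqrtScale π (e ᵥ* (tp - p)))
      ≤ opNorm (tp - p) * √(πmax / πmin) * euclNorm (invSqrtScale π e) :=
    calc euclNorm (invSqrtScale π (e ᵥ* (tp - p)))
        ≤ euclNorm (e ᵥ* (tp - p)) / √πmin := euclNorm_invSqrtScale_le hπmin_pos hπmin _
      _ ≤ opNorm (tp - p) * euclNorm e / √πmin := by
          gcongr; exact euclNorm_vecMul_le e (tp - p)
      _ ≤ opNorm (tp - p) * (√πmax * euclNorm (invSqrtScale π e)) / √πmin := by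
          gcongr
          · exact opNorm_nonneg _
          · exact euclNorm_le_sqrt_mul_euclNorm_invSqrtScale hπ hπmax e
      _ = opNorm (tp - p) * √(πmax / πmin) * euclNorm (invSqrtScale π e) := by
          rw [Real.sqrt_div' _ hπmin_pos.le]; ring
  have hπΔ : euclNorm (invSqrtScale π (π ᵥ* (tp - p))) ≤ opNorm (tp - p) * euclNorm π / √πmin :=
    (euclNorm_invSqrtScale_le hπmin_pos hπmin _).trans
      (by gcongr; exact euclNorm_vecMul_le π (tp - p))
  rw [vecMul_sub_eq_of_vecMul_eq_self hstat μ tp, invSqrtScale_add, invSqrtScale_add,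
    ← invSqrtScale_vecMul_centeredSymmetrization hπ he]
  calc _ ≤ euclNorm (invSqrtScale π e ᵥ* centeredSymmetrization π p)
        + (euclNorm (invSqrtScale π (e ᵥ* (tp - p))) + euclNorm (invSqrtScale π (π ᵥ* (tp - p)))) :=
        (euclNorm_add_le _ _).trans (add_le_add_right (euclNorm_add_le _ _) _)
    _ ≤ _ := by linarith

lemma euclNorm_vecMul_pow_sub_le {πmin πmax ρ : ℝ} (hπmin_pos : 0 < πmin)
    (hπmin : ∀ i, πmin ≤ π i) (hπmax : ∀ i, π i ≤ πmax) {p tp : Matrix (Fin n) (Fin n) ℝ}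
    (hstat : π ᵥ* p = π) (htp : tp *ᵥ 1 = 1) {μ : Fin n → ℝ} (hμ : ∑ i, μ i = ∑ i, π i)
    (hρ : ρ = lamMax π p + opNorm (tp - p) * √(πmax / πmin)) (hρ1 : ρ < 1) (t : ℕ) :
    euclNorm (μ ᵥ* tp ^ t - π) ≤ √πmax * (ρ ^ t * (euclNorm (μ - π) / √πmin)
      + opNorm (tp - p) * euclNorm π / √πmin / (1 - ρ)) := by
  have hπ i : 0 < π i := hπmin_pos.trans_le (hπmin i)
  have hρ0 : 0 ≤ ρ :=
    hρ ▸ add_nonneg (opNorm_nonneg _) (mul_nonneg (opNorm_nonneg _) (Real.sqrt_nonneg _))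
  set b := opNorm (tp - p) * euclNorm π / √πmin
  have hb : 0 ≤ b :=
    div_nonneg (mul_nonneg (opNorm_nonneg _) (euclNorm_nonneg π)) (Real.sqrt_nonneg _)
  set a : ℕ → ℝ := fun s => euclNorm (invSqrtScale π (μ ᵥ* tp ^ s - π))
  have hstep (s : ℕ) : a (s + 1) ≤ ρ * a s + b := by
    simp only [a, pow_succ, ← vecMul_vecMul, hρ]
    refine euclNorm_invSqrtScale_vecMul_sub_le hπmin_pos hπmin hπmax hstat ?_
    rw [sum_vecMul_of_mulVec_one (pow_mulVec_one htp s), hμ]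
  have ha0 : a 0 ≤ euclNorm (μ - π) / √πmin := by
    simpa [a] using euclNorm_invSqrtScale_le hπmin_pos hπmin (μ - π)
  calc euclNorm (μ ᵥ* tp ^ t - π) ≤ √πmax * a t :=
        euclNorm_le_sqrt_mul_euclNorm_invSqrtScale hπ hπmax _
    _ ≤ _ := by
        gcongr
        exact (le_pow_mul_add_div_one_sub_of_le_mul_add hρ0 hρ1 hb hstep t).trans (by gcongr)

end Weighted

theorem markov_perturbation_general {n : ℕ} [NeZero n]
    (p tp : Matrix (Fin n) (Fin n) ℝ) (π : Fin n → ℝ)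
    (hπpos : ∀ i, 0 < π i) (hπsum : ∑ i, π i = 1)
    (hprow : ∀ i, ∑ j, p i j = 1)
    (htprow : ∀ i, ∑ j, tp i j = 1)
    (hprev : ∀ i j, π i * p i j = π j * p j i)
    (π0 : Fin n → ℝ) (hπ0sum : ∑ i, π0 i = 1)
    (πmax πmin : ℝ)
    (hπmax : πmax = Finset.univ.sup' Finset.univ_nonempty π)
    (hπmin : πmin = Finset.univ.inf' Finset.univ_nonempty π)
    (ρ : ℝ) (hρ : ρ = lamMax π p + opNorm (tp - p) * Real.sqrt (πmax / πmin))
    (hρ1 : ρ < 1) (t : ℕ) :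
    euclNorm (fun i => (Matrix.vecMul π0 (tp ^ t)) i - π i) / euclNorm π
      ≤ ρ ^ t * (euclNorm (fun i => π0 i - π i) / euclNorm π) * Real.sqrt (πmax / πmin)
        + (1 / (1 - ρ)) * opNorm (tp - p) * Real.sqrt (πmax / πmin) := by
  have hle_πmax : ∀ i, π i ≤ πmax := fun i => hπmax ▸ le_sup' π (mem_univ i)
  have hπmin_le : ∀ i, πmin ≤ π i := fun i => hπmin ▸ inf'_le π (mem_univ i)
  have hπmin_pos : 0 < πmin := hπmin ▸ (lt_inf'_iff _).2 fun i _ => hπpos i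
  have hπ_norm : 0 < euclNorm π :=
    Real.sqrt_pos.2 (sum_pos (fun i _ => pow_pos (hπpos i) 2) univ_nonempty)
  have hstat : π ᵥ* p = π := vecMul_eq_self_of_reversible (mulVec_one_of_sum_row hprow) hprev
  have herr := euclNorm_vecMul_pow_sub_le hπmin_pos hπmin_le hle_πmax hstat
    (mulVec_one_of_sum_row htprow) (hπ0sum.trans hπsum.symm) hρ hρ1 t
  change euclNorm (π0 ᵥ* tp ^ t - π) / _ ≤ ρ ^ t * (euclNorm (π0 - π) / _) * _ + _
  calc euclNorm (π0 ᵥ* tp ^ t - π) / euclNorm π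
      ≤ √πmax * (ρ ^ t * (euclNorm (π0 - π) / √πmin)
          + opNorm (tp - p) * euclNorm π / √πmin / (1 - ρ)) / euclNorm π := by gcongr
    _ = _ := by
        rw [Real.sqrt_div' _ hπmin_pos.le]
        field_simp

/-- Perturbation lemma for Markov chains (Lemma 2 of Negahban–Oh–Shah): for an
aperiodic, irreducible (i.e. primitive), reversible chain `p` with stationary
distribution `π` and a perturbed chain `p̃ = p + Δ`, the distribution `π̃^{(t)}` at time
`t` under `p̃` started from `π̃^{(0)}` satisfies
`‖π̃^{(t)} − π‖/‖π‖ ≤ ρ^t (‖π̃^{(0)} − π‖/‖π‖)√(π_max/π_min) + ‖Δ‖₂ √(π_max/π_min)/(1−ρ)`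
with `ρ = λ_max(p) + ‖Δ‖₂ √(π_max/π_min)` (assumed `< 1`). -/
theorem markov_perturbation {n : ℕ} [NeZero n]
    (p tp : Matrix (Fin n) (Fin n) ℝ) (π : Fin n → ℝ)
    (hπpos : ∀ i, 0 < π i) (hπsum : ∑ i, π i = 1)
    (hpnn : ∀ i j, 0 ≤ p i j) (hprow : ∀ i, ∑ j, p i j = 1)
    (htpnn : ∀ i j, 0 ≤ tp i j) (htprow : ∀ i, ∑ j, tp i j = 1)
    (hprimitive : ∃ k : ℕ, ∀ i j, 0 < (p ^ k) i j)
    (hprev : ∀ i j, π i * p i j = π j * p j i)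
    (π0 : Fin n → ℝ) (hπ0nn : ∀ i, 0 ≤ π0 i) (hπ0sum : ∑ i, π0 i = 1)
    (πmax πmin : ℝ)
    (hπmax : πmax = Finset.univ.sup' Finset.univ_nonempty π)
    (hπmin : πmin = Finset.univ.inf' Finset.univ_nonempty π)
    (ρ : ℝ) (hρ : ρ = lamMax π p + opNorm (tp - p) * Real.sqrt (πmax / πmin))
    (hρ1 : ρ < 1) (t : ℕ) :
    euclNorm (fun i => (Matrix.vecMul π0 (tp ^ t)) i - π i) / euclNorm π
      ≤ ρ ^ t * (euclNorm (fun i => π0 i - π i) / euclNorm π) * Real.sqrt (πmax / πmin)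
        + (1 / (1 - ρ)) * opNorm (tp - p) * Real.sqrt (πmax / πmin) :=
  markov_perturbation_general p tp π hπpos hπsum hprow htprow hprev π0 hπ0sum πmax πmin hπmax hπmin
    ρ hρ hρ1 t
end

section
/- Let M₂ = P Q Pᵀ ∈ ℝ^{N×N} have rank r with eigendecomposition M₂ = U Σ Uᵀ (Σ positive diagonal r×r) and define H = M₃[U Σ^{-1/2}, U Σ^{-1/2}, U Σ^{-1/2}] where M₃ = ∑_{a=1}^r q_a (P_a ⊗ P_a ⊗ P_a). Then there exists an orthogonal matrix V^H ∈ ℝ^{r×r} with columns v_a^H and scalars λ_a^H = q_a^{-1/2} such that H = ∑_{a=1}^r λ_a^H (v_a^H ⊗ v_a^H ⊗ v_a^H), and moreover P = U Σ^{1/2} V^H Λ^H and Q = (Λ^H)^{-2} with Λ^H = diag(λ_1^H,...,λ_r^H). -/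
open Matrix

/-!
Write `M₂ = B Bᵀ` with `B = P Q^{1/2}` and let `A = U Σ^{-1/2}` be the whitening matrix, so that
`Aᵀ M₂ A = 1`. Then `V = Aᵀ B` satisfies `V Vᵀ = Aᵀ M₂ A = 1`, and since `V` is square it is
orthogonal. Multilinearity turns `M₃[A, A, A]` into `∑ₜ qₜ (Aᵀ Pₜ)^{⊗3} = ∑ₜ qₜ^{-1/2} vₜ^{⊗3}`.
Finally `U Uᵀ` fixes `B Bᵀ = U Σ Uᵀ`, hence fixes `B`, and so
`P = U Uᵀ B Q^{-1/2} = U Σ^{1/2} V Q^{-1/2}`.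
-/

/-- `T[A, A, A]` in the notation of the statement. -/
def multilinearTransform {R ι κ : Type*} [CommSemiring R] [Fintype ι]
    (T : ι → ι → ι → R) (A : Matrix ι κ R) (a b c : κ) : R :=
  ∑ i, ∑ j, ∑ k, T i j k * A i a * A j b * A k c

theorem multilinearTransform_sum_cubes {R ι κ τ : Type*} [CommSemiring R] [Fintype ι]
    [Fintype τ] (w : τ → R) (P : Matrix ι τ R) (A : Matrix ι κ R) (a b c : κ) :
    multilinearTransform (fun i j k => ∑ t, w t * P i t * P j t * P k t) A a b c =
      ∑ t, w t * (Aᵀ * P) a t * (Aᵀ * P) b t * (Aᵀ * P) c t := by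
  simp only [multilinearTransform, mul_apply, transpose_apply, Finset.mul_sum, Finset.sum_mul]
  simp_rw [Finset.sum_comm (t := (Finset.univ : Finset τ))]
  refine Finset.sum_congr rfl fun t _ => ?_
  rw [Finset.sum_comm_cycle]
  refine Finset.sum_congr rfl fun k _ => ?_
  rw [Finset.sum_comm]
  exact Finset.sum_congr rfl fun j _ => Finset.sum_congr rfl fun i _ => by ring

theorem mul_eq_self_of_mul_mul_conjTranspose_eq {R m n : Type*} [Field R] [PartialOrder R]
    [StarRing R] [StarOrderedRing R] [Fintype m] [Fintype n] [DecidableEq m]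
    {X : Matrix m m R} {B : Matrix m n R} (h : X * (B * Bᴴ) = B * Bᴴ) : X * B = B := by
  have h₀ := (mul_self_mul_conjTranspose_eq_zero B (X - 1)).mp
    (by rw [Matrix.sub_mul, Matrix.one_mul, h, sub_self])
  rwa [Matrix.sub_mul, Matrix.one_mul, sub_eq_zero] at h₀

theorem mul_transpose_mul_eq_self_of_mul_transpose_eq {m n r : Type*} [Fintype m] [Fintype n]
    [Fintype r] [DecidableEq m] [DecidableEq r]
    {U : Matrix m r ℝ} {B : Matrix m n ℝ} {D : Matrix r r ℝ}
    (hU : Uᵀ * U = 1) (h : B * Bᵀ = U * D * Uᵀ) : U * Uᵀ * B = B := by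
  refine mul_eq_self_of_mul_mul_conjTranspose_eq ?_
  rw [conjTranspose_eq_transpose_of_trivial, h]
  simp only [Matrix.mul_assoc]
  rw [← Matrix.mul_assoc Uᵀ U, hU, Matrix.one_mul]

theorem diagonal_mul_diagonal_inv {K n : Type*} [DivisionRing K] [Fintype n] [DecidableEq n]
    {d : n → K} (hd : ∀ a, d a ≠ 0) : diagonal d * diagonal (fun a => (d a)⁻¹) = 1 := by
  rw [diagonal_mul_diagonal, ← diagonal_one]
  exact congrArg _ (funext fun a => mul_inv_cancel₀ (hd a))

theorem mul_diagonal_sqrt_mul_transpose {m n : Type*} [Fintype n] [DecidableEq n]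
    (P : Matrix m n ℝ) {q : n → ℝ} (hq : ∀ a, 0 ≤ q a) :
    P * diagonal (fun a => √(q a)) * (P * diagonal fun a => √(q a))ᵀ = P * diagonal q * Pᵀ := by
  rw [transpose_mul, diagonal_transpose, Matrix.mul_assoc, ← Matrix.mul_assoc (diagonal _),
    diagonal_mul_diagonal, ← Matrix.mul_assoc]
  exact congrArg (P * diagonal · * Pᵀ) (funext fun a => Real.mul_self_sqrt (hq a))

noncomputable def whitener {m r : Type*} [Fintype r] [DecidableEq r]
    (U : Matrix m r ℝ) (σ : r → ℝ) : Matrix m r ℝ :=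
  U * diagonal fun a => (√(σ a))⁻¹

section Whitener

variable {m r : Type*} [Fintype r] [DecidableEq r] {U : Matrix m r ℝ} {σ : r → ℝ}

theorem whitener_transpose_mul_mul_whitener [Fintype m] (hU : Uᵀ * U = 1)
    (hσ : ∀ a, 0 < σ a) : (whitener U σ)ᵀ * (U * diagonal σ * Uᵀ) * whitener U σ = 1 := by
  set S : Matrix r r ℝ := diagonal fun a => (√(σ a))⁻¹
  calc (U * S)ᵀ * (U * diagonal σ * Uᵀ) * (U * S)
        = S * (Uᵀ * U) * diagonal σ * (Uᵀ * U) * S := by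
        simp only [S, transpose_mul, diagonal_transpose, Matrix.mul_assoc]
    _ = 1 := by
        rw [hU, Matrix.mul_one, Matrix.mul_one, diagonal_mul_diagonal, diagonal_mul_diagonal,
          ← diagonal_one]
        refine congrArg _ (funext fun a => ?_)
        have := (Real.sqrt_pos.mpr (hσ a)).ne'
        field_simp
        exact (Real.sq_sqrt (hσ a).le).symm

theorem mul_diagonal_sqrt_mul_whitener_transpose (hσ : ∀ a, 0 < σ a) :
    U * diagonal (fun a => √(σ a)) * (whitener U σ)ᵀ = U * Uᵀ := by
  rw [whitener, transpose_mul, diagonal_transpose, ← Matrix.mul_assoc,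
    Matrix.mul_assoc U (diagonal _),
    diagonal_mul_diagonal_inv fun a => (Real.sqrt_pos.mpr (hσ a)).ne', Matrix.mul_one]

end Whitener

theorem whitened_tensor_decomposition_general {N r : ℕ}
    (P : Matrix (Fin N) (Fin r) ℝ) (q : Fin r → ℝ)
    (hq : ∀ a, 0 < q a)
    (U : Matrix (Fin N) (Fin r) ℝ) (σ : Fin r → ℝ)
    (hσ : ∀ a, 0 < σ a) (hU : Uᵀ * U = 1)
    (heig : P * Matrix.diagonal q * Pᵀ = U * Matrix.diagonal σ * Uᵀ)
    (H : Fin r → Fin r → Fin r → ℝ)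
    (hH : ∀ a b c, H a b c =
      ∑ i, ∑ j, ∑ k,
        (∑ t, q t * P i t * P j t * P k t)
          * (U i a * (Real.sqrt (σ a))⁻¹) * (U j b * (Real.sqrt (σ b))⁻¹)
          * (U k c * (Real.sqrt (σ c))⁻¹)) :
    ∃ (V : Matrix (Fin r) (Fin r) ℝ) (lam : Fin r → ℝ),
      Vᵀ * V = 1 ∧ V * Vᵀ = 1 ∧
      (∀ a, lam a = (Real.sqrt (q a))⁻¹) ∧
      (∀ a b c, H a b c = ∑ t, lam t * V a t * V b t * V c t) ∧
      P = U * Matrix.diagonal (fun a => Real.sqrt (σ a)) * V * Matrix.diagonal lam ∧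
      Matrix.diagonal q = Matrix.diagonal (fun a => ((lam a) ^ 2)⁻¹) := by
  set A := whitener U σ
  set B := P * diagonal fun t => √(q t)
  have hsqrt_q : ∀ t, √(q t) ≠ 0 := fun t => (Real.sqrt_pos.mpr (hq t)).ne'
  have hBB : B * Bᵀ = U * diagonal σ * Uᵀ := by
    rw [mul_diagonal_sqrt_mul_transpose P fun t => (hq t).le, heig]
  have hV : Aᵀ * B * (Aᵀ * B)ᵀ = 1 := by
    rw [transpose_mul, transpose_transpose, Matrix.mul_assoc, ← Matrix.mul_assoc B, hBB,
      ← Matrix.mul_assoc]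
    exact whitener_transpose_mul_mul_whitener hU hσ
  refine ⟨Aᵀ * B, fun t => (√(q t))⁻¹, mul_eq_one_comm.mp hV, hV, fun _ => rfl, ?_, ?_, ?_⟩
  · intro a b c
    have hA : ∀ i a, U i a * (√(σ a))⁻¹ = A i a := fun i a => by
      simp only [A, whitener, mul_diagonal]
    calc H a b c = multilinearTransform (fun i j k => ∑ t, q t * P i t * P j t * P k t) A a b c :=
          by simp only [hH, hA, multilinearTransform]
      _ = ∑ t, q t * (Aᵀ * P) a t * (Aᵀ * P) b t * (Aᵀ * P) c t :=
          multilinearTransform_sum_cubes q P A a b c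
      _ = ∑ t, (√(q t))⁻¹ * (Aᵀ * B) a t * (Aᵀ * B) b t * (Aᵀ * B) c t := by
          refine Finset.sum_congr rfl fun t _ => ?_
          have := hsqrt_q t
          simp only [B, ← Matrix.mul_assoc, mul_diagonal]
          field_simp
          rw [Real.sq_sqrt (hq t).le]
          ring
  · calc P = U * Uᵀ * B * diagonal fun t => (√(q t))⁻¹ := by
          rw [mul_transpose_mul_eq_self_of_mul_transpose_eq hU hBB, Matrix.mul_assoc,
            diagonal_mul_diagonal_inv hsqrt_q, Matrix.mul_one]
      _ = U * diagonal (fun a => √(σ a)) * (Aᵀ * B) * diagonal fun t => (√(q t))⁻¹ := by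
          rw [← mul_diagonal_sqrt_mul_whitener_transpose hσ, Matrix.mul_assoc _ Aᵀ]
  · simp only [inv_pow, inv_inv, Real.sq_sqrt (hq _).le]

/-- Exact tensor decomposition (Theorem 3.1 of Jain–Oh): if `M₂ = PQPᵀ` has rank `r`
and eigendecomposition `M₂ = U Σ Uᵀ`, then the whitened tensor
`H = M₃[UΣ^{-1/2}, UΣ^{-1/2}, UΣ^{-1/2}]`, with `M₃ = ∑_a q_a P_a⊗P_a⊗P_a`, admits an
orthogonal decomposition `H = ∑_a λ_a (v_a ⊗ v_a ⊗ v_a)` with `λ_a = q_a^{-1/2}`, and the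
parameters are recovered as `P = U Σ^{1/2} V^H Λ^H` and `Q = (Λ^H)^{-2}`. -/
theorem whitened_tensor_decomposition {N r : ℕ}
    (P : Matrix (Fin N) (Fin r) ℝ) (q : Fin r → ℝ)
    (hq : ∀ a, 0 < q a) (hqsum : ∑ a, q a = 1)
    (hrank : (P * Matrix.diagonal q * Pᵀ).rank = r)
    (U : Matrix (Fin N) (Fin r) ℝ) (σ : Fin r → ℝ)
    (hσ : ∀ a, 0 < σ a) (hU : Uᵀ * U = 1)
    (heig : P * Matrix.diagonal q * Pᵀ = U * Matrix.diagonal σ * Uᵀ)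
    (H : Fin r → Fin r → Fin r → ℝ)
    (hH : ∀ a b c, H a b c =
      ∑ i, ∑ j, ∑ k,
        (∑ t, q t * P i t * P j t * P k t)
          * (U i a * (Real.sqrt (σ a))⁻¹) * (U j b * (Real.sqrt (σ b))⁻¹)
          * (U k c * (Real.sqrt (σ c))⁻¹)) :
    ∃ (V : Matrix (Fin r) (Fin r) ℝ) (lam : Fin r → ℝ),
      Vᵀ * V = 1 ∧ V * Vᵀ = 1 ∧
      (∀ a, lam a = (Real.sqrt (q a))⁻¹) ∧
      (∀ a b c, H a b c = ∑ t, lam t * V a t * V b t * V c t) ∧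
      P = U * Matrix.diagonal (fun a => Real.sqrt (σ a)) * V * Matrix.diagonal lam ∧
      Matrix.diagonal q = Matrix.diagonal (fun a => ((lam a) ^ 2)⁻¹) :=
  whitened_tensor_decomposition_general P q hq U σ hσ hU heig H hH
end
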